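/- Let a, u, v be real numbers with cosh(a·cos u) ≠ cos(a·sin u). Then [cos(a·sin(u) + u·v) − e^{−a·cos(u)}·cos(u·v)] / [cosh(a·cos(u)) − cos(a·sin(u))] = 2·Re( e^{iuv} / (exp(a·e^{−iu}) − 1) ). -/

import Mathlib

/-!
Write `c = a cos u`, `s = a sin u`, so that `a e^{-iu} = c - is`. Multiplying numerator and
denominator by the conjugate of `e^{c - is} - 1` turns the right side into
`2 (e^c cos(s + uv) - cos(uv)) / |e^{c - is} - 1|²`, and
`|e^{c - is} - 1|² = 2 e^c (cosh c - cos s)`.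
Cancelling `2 e^c` gives the left side.
-/

namespace Complex

theorem normSq_exp_sub_one (z : ℂ) :
    normSq (exp z - 1) = 2 * Real.exp z.re * (Real.cosh z.re - Real.cos z.im) := by
  have hexp : Real.exp z.re * Real.exp (-z.re) = 1 := by
    rw [Real.exp_neg, mul_inv_cancel₀ (Real.exp_pos _).ne']
  rw [normSq_apply, sub_re, sub_im, exp_re, exp_im, one_re, one_im, Real.cosh_eq]
  linear_combination Real.exp z.re ^ 2 * Real.sin_sq_add_cos_sq z.im - hexp

theorem re_exp_mul_I_div_exp_sub_one (t : ℝ) (z : ℂ) :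
    (exp (t * I) / (exp z - 1)).re =
      (Real.exp z.re * Real.cos (t - z.im) - Real.cos t) /
        (2 * Real.exp z.re * (Real.cosh z.re - Real.cos z.im)) := by
  rw [div_re, ← add_div, normSq_exp_sub_one, exp_ofReal_mul_I_re, exp_ofReal_mul_I_im,
    sub_re, sub_im, exp_re, exp_im, one_re, one_im, Real.cos_sub]
  ring_nf

end Complex

theorem generalized_lambert_lemma_general (a u v : ℝ) :
    (Real.cos (a * Real.sin u + u * v) - Real.exp (-(a * Real.cos u)) * Real.cos (u * v))
      / (Real.cosh (a * Real.cos u) - Real.cos (a * Real.sin u))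
    = 2 * (Complex.exp (Complex.I * u * v)
        / (Complex.exp (a * Complex.exp (-(Complex.I * u))) - 1)).re := by
  have hre : ((a : ℂ) * Complex.exp (-(Complex.I * u))).re = a * Real.cos u := by
    simp [Complex.exp_re]
  have him : ((a : ℂ) * Complex.exp (-(Complex.I * u))).im = -(a * Real.sin u) := by
    simp [Complex.exp_im]
  rw [show Complex.I * u * v = ((u * v : ℝ) : ℂ) * Complex.I by push_cast; ring,
    Complex.re_exp_mul_I_div_exp_sub_one,
    hre, him, Real.cos_neg, sub_neg_eq_add, add_comm (u * v)]
  set c := a * Real.cos u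
  set s := a * Real.sin u
  have hexp : Real.exp c * Real.exp (-c) = 1 := by
    rw [Real.exp_neg, mul_inv_cancel₀ (Real.exp_pos _).ne']
  calc _ = Real.exp c * (Real.cos (s + u * v) - Real.exp (-c) * Real.cos (u * v)) /
        (Real.exp c * (Real.cosh c - Real.cos s)) :=
        (mul_div_mul_left _ _ (Real.exp_pos c).ne').symm
    _ = _ := by
      rw [mul_sub, ← mul_assoc, hexp, one_mul, ← mul_div_assoc, mul_assoc 2 (Real.exp c),
        mul_div_mul_left _ _ two_ne_zero]

/-- Lemma 3.1 of Dixit–Maji: for real `a, u, v` with `cosh(a cos u) ≠ cos(a sin u)`,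
`[cos(a sin u + uv) − e^{−a cos u} cos(uv)] / [cosh(a cos u) − cos(a sin u)]
  = 2 Re( e^{iuv} / (exp(a e^{−iu}) − 1) )`. -/
theorem generalized_lambert_lemma (a u v : ℝ)
    (h : Real.cosh (a * Real.cos u) ≠ Real.cos (a * Real.sin u)) :
    (Real.cos (a * Real.sin u + u * v) - Real.exp (-(a * Real.cos u)) * Real.cos (u * v))
      / (Real.cosh (a * Real.cos u) - Real.cos (a * Real.sin u))
    = 2 * (Complex.exp (Complex.I * u * v)
        / (Complex.exp (a * Complex.exp (-(Complex.I * u))) - 1)).re :=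
  generalized_lambert_lemma_general a u v
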